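/- arXiv:2305.14161 — 7 statements merged into one kernel-verified Lean document; each statement's English description precedes it below -/
import Mathlib

section
/- Let f : ℝ^d → ℝ be convex with minimizer x*, and let the subgradient iteration be x^{k+1} = x^k - (β_k/‖g(x^k)‖) g(x^k) with g(x^k) ∈ ∂f(x^k) nonzero and β_k > 0. Then for every k ≥ 0, ‖x^{k+1} - x*‖² ≤ ‖x^0 - x*‖² + Σ_{j=0}^{k} β_j². -/
open scoped InnerProductSpace BigOperators

/-! At a minimizer `x⋆`, the subgradient inequality gives `⟪g k, x k - x⋆⟫ ≥ 0`, so the normalized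
step `x k - x (k+1)`, a nonnegative multiple of `g k` of norm at most `β k`, makes an acute angle with
`x k - x⋆`. Expanding the square then gives `‖x (k+1) - x⋆‖² ≤ ‖x k - x⋆‖² + β k ²`, which
telescopes. -/

theorem le_add_sum_range_of_le_add {α : Type*} [AddCommGroup α] [PartialOrder α]
    [IsOrderedAddMonoid α] {e s : ℕ → α} (h : ∀ k, e (k + 1) ≤ e k + s k) (n : ℕ) :
    e n ≤ e 0 + ∑ j ∈ Finset.range n, s j := by
  have hsum : e n - e 0 ≤ ∑ j ∈ Finset.range n, s j := by
    rw [← Finset.sum_range_sub]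
    exact Finset.sum_le_sum fun j _ => sub_le_iff_le_add'.2 (h j)
  exact sub_le_iff_le_add'.1 hsum

theorem norm_div_norm_smul_le {E : Type*} [NormedAddCommGroup E] [NormedSpace ℝ E]
    {b : ℝ} (hb : 0 ≤ b) (v : E) : ‖(b / ‖v‖) • v‖ ≤ b := by
  by_cases hv : v = 0
  · simpa [hv] using hb
  · rw [norm_smul, norm_div, norm_norm, div_mul_cancel₀ _ (norm_ne_zero_iff.2 hv),
      Real.norm_of_nonneg hb]

section InnerProductSpace

variable {E : Type*} [NormedAddCommGroup E] [InnerProductSpace ℝ E]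

theorem norm_sub_sq_le_of_inner_nonneg {u v : E} (h : 0 ≤ ⟪u, v⟫_ℝ) :
    ‖u - v‖ ^ 2 ≤ ‖u‖ ^ 2 + ‖v‖ ^ 2 := by
  rw [norm_sub_sq_real]
  linarith

theorem inner_sub_nonneg_of_subgradient_of_le {f : E → ℝ} {a g z : E}
    (hsub : f a + ⟪g, z - a⟫_ℝ ≤ f z) (hmin : f z ≤ f a) : 0 ≤ ⟪g, a - z⟫_ℝ := by
  rw [← neg_sub z a, inner_neg_right]
  linarith

theorem norm_normalized_step_sub_sq_le {a g z : E} {b : ℝ} (hb : 0 ≤ b)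
    (hg : 0 ≤ ⟪g, a - z⟫_ℝ) :
    ‖a - (b / ‖g‖) • g - z‖ ^ 2 ≤ ‖a - z‖ ^ 2 + b ^ 2 := by
  have hacute : 0 ≤ ⟪a - z, (b / ‖g‖) • g⟫_ℝ := by
    rw [real_inner_smul_right, real_inner_comm]
    exact mul_nonneg (by positivity) hg
  calc ‖a - (b / ‖g‖) • g - z‖ ^ 2 = ‖(a - z) - (b / ‖g‖) • g‖ ^ 2 := by abel_nf
    _ ≤ ‖a - z‖ ^ 2 + ‖(b / ‖g‖) • g‖ ^ 2 := norm_sub_sq_le_of_inner_nonneg hacute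
    _ ≤ ‖a - z‖ ^ 2 + b ^ 2 := by gcongr; exact norm_div_norm_smul_le hb g

end InnerProductSpace

theorem subgrad_iterates_bounded_general
    (d : ℕ) (f : EuclideanSpace ℝ (Fin d) → ℝ)
    (x g : ℕ → EuclideanSpace ℝ (Fin d)) (β : ℕ → ℝ)
    (hβ : ∀ k, 0 < β k)
    (hsub : ∀ k y, f (x k) + ⟪g k, y - x k⟫_ℝ ≤ f y)
    (xstar : EuclideanSpace ℝ (Fin d)) (hmin : ∀ y, f xstar ≤ f y)
    (hupd : ∀ k, x (k + 1) = x k - (β k / ‖g k‖) • g k) :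
    ∀ k, ‖x (k + 1) - xstar‖ ^ 2 ≤
      ‖x 0 - xstar‖ ^ 2 + ∑ j ∈ Finset.range (k + 1), (β j) ^ 2 := by
  have hstep (k : ℕ) : ‖x (k + 1) - xstar‖ ^ 2 ≤ ‖x k - xstar‖ ^ 2 + β k ^ 2 := by
    rw [hupd k]
    exact norm_normalized_step_sub_sq_le (hβ k).le
      (inner_sub_nonneg_of_subgradient_of_le (hsub k xstar) (hmin (x k)))
  exact fun k => le_add_sum_range_of_le_add (e := fun j => ‖x j - xstar‖ ^ 2) hstep (k + 1)

/-- Boundedness of subgradient iterates for convex `f` with a minimizer. -/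
theorem subgrad_iterates_bounded
    (d : ℕ) (f : EuclideanSpace ℝ (Fin d) → ℝ)
    (hconv : ConvexOn ℝ Set.univ f)
    (x g : ℕ → EuclideanSpace ℝ (Fin d)) (β : ℕ → ℝ)
    (hβ : ∀ k, 0 < β k) (hg : ∀ k, g k ≠ 0)
    (hsub : ∀ k y, f (x k) + ⟪g k, y - x k⟫_ℝ ≤ f y)
    (xstar : EuclideanSpace ℝ (Fin d)) (hmin : ∀ y, f xstar ≤ f y)
    (hupd : ∀ k, x (k + 1) = x k - (β k / ‖g k‖) • g k) :
    ∀ k, ‖x (k + 1) - xstar‖ ^ 2 ≤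
      ‖x 0 - xstar‖ ^ 2 + ∑ j ∈ Finset.range (k + 1), (β j) ^ 2 :=
  subgrad_iterates_bounded_general d f x g β hβ hsub xstar hmin hupd
end

section
/- Let f : ℝ^d → ℝ be ρ-weakly convex, lower semicontinuous, bounded below, and let 0 < λ < 1/ρ. Then f has bounded sublevel sets if and only if the Moreau envelope f_λ(x) = min_y { f(y) + ‖y - x‖²/(2λ) } has bounded sublevel sets. -/
open scoped BigOperators

/-- Equivalence of bounded sublevel sets for `f` and its Moreau envelope (Lemma 2.2). -/
theorem moreau_bounded_sublevel_iff
    (d : ℕ) (f : EuclideanSpace ℝ (Fin d) → ℝ) (ρ lam : ℝ)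
    (hρ : 0 < ρ) (hlam : 0 < lam) (hlamρ : lam < 1 / ρ)
    (hwc : ConvexOn ℝ Set.univ (fun x => f x + (ρ / 2) * ‖x‖ ^ 2))
    (hlsc : LowerSemicontinuous f)
    (hbdd : BddBelow (Set.range f))
    (flam : EuclideanSpace ℝ (Fin d) → ℝ)
    (p : EuclideanSpace ℝ (Fin d) → EuclideanSpace ℝ (Fin d))
    (hprox : ∀ x y, f (p x) + ‖p x - x‖ ^ 2 / (2 * lam) ≤ f y + ‖y - x‖ ^ 2 / (2 * lam))
    (hflam : ∀ x, flam x = f (p x) + ‖p x - x‖ ^ 2 / (2 * lam)) :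
    (∀ s : ℝ, Bornology.IsBounded {x | f x ≤ s}) ↔
      (∀ s : ℝ, Bornology.IsBounded {x | flam x ≤ s}) := by
  obtain ⟨m, hm⟩ := hbdd
  have hmle : ∀ y, m ≤ f y := fun y => hm ⟨y, rfl⟩
  constructor
  · -- f bounded sublevels → flam bounded sublevels
    intro h s
    obtain ⟨C, hC⟩ := (h s).exists_norm_le
    have hCset : ∀ y, f y ≤ s → ‖y‖ ≤ C := fun y hy => hC y hy
    rw [isBounded_iff_forall_norm_le]
    refine ⟨C + Real.sqrt (2 * lam * (s - m)), ?_⟩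
    intro x hx
    simp only [Set.mem_setOf_eq, hflam] at hx
    have hsq : 0 ≤ ‖p x - x‖ ^ 2 / (2 * lam) := by positivity
    have hfp : f (p x) ≤ s := by linarith
    have hnorm2 : ‖p x - x‖ ^ 2 ≤ 2 * lam * (s - m) := by
      have := hmle (p x)
      have h2 : ‖p x - x‖ ^ 2 / (2 * lam) ≤ s - m := by linarith
      calc ‖p x - x‖ ^ 2 = ‖p x - x‖ ^ 2 / (2 * lam) * (2 * lam) := by
            field_simp
        _ ≤ (s - m) * (2 * lam) := by
            apply mul_le_mul_of_nonneg_right h2; positivity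
        _ = 2 * lam * (s - m) := by ring
    have hdist : ‖p x - x‖ ≤ Real.sqrt (2 * lam * (s - m)) := by
      have := Real.sqrt_le_sqrt hnorm2
      rwa [Real.sqrt_sq (norm_nonneg _)] at this
    calc ‖x‖ = ‖p x - (p x - x)‖ := by rw [sub_sub_cancel]
      _ ≤ ‖p x‖ + ‖p x - x‖ := norm_sub_le _ _
      _ ≤ C + Real.sqrt (2 * lam * (s - m)) :=
          add_le_add (hCset _ hfp) hdist
  · -- flam bounded sublevels → f bounded sublevels
    intro h s
    apply (h s).subset
    intro x hx
    simp only [Set.mem_setOf_eq] at hx ⊢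
    have := hprox x x
    simp only [sub_self, norm_zero] at this
    rw [hflam]
    have h0 : (0:ℝ) ^ 2 / (2 * lam) = 0 := by simp
    calc f (p x) + ‖p x - x‖ ^ 2 / (2 * lam) ≤ f x + 0 ^ 2 / (2 * lam) := this
      _ = f x := by rw [h0, add_zero]
      _ ≤ s := hx
end

section
/- Let f : ℝ^d → ℝ be ρ-weakly convex, lsc, bounded below, with 0 < λ < 1/ρ. Let x^{k+1} = x^k - (β_k/‖g(x^k)‖) g(x^k) with g(x^k) ∈ ∂f(x^k) nonzero and β_k > 0. Then f_λ(x^{k+1}) ≤ f_λ(x^k) - ((1/λ - ρ) β_k / (λ ‖g(x^k)‖)) ‖x^k - prox_{λf}(x^k)‖² + β_k²/(2λ). -/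
/-!
The prox objective `y ↦ f y + ‖y - x‖² / (2λ)` is `(1/λ - ρ)`-strongly convex, so its minimiser
`q = prox_{λf} x` has quadratic growth: comparing its value at `x` with the weak subgradient
inequality at `x` gives `(1/λ - ρ) ‖x - q‖² ≤ ⟪g, x - q⟫`. After the step, `q` is still a
candidate in the infimum defining `f_λ(x⁺)`, and expanding `‖q - x⁺‖²` with this bound on the
cross term gives the descent.
-/

open Set Filter Topology
open scoped InnerProductSpace

section

variable {E : Type*} [NormedAddCommGroup E]

theorem UniformConvexOn.add_le_of_isMinOn [NormedSpace ℝ E] {s : Set E} {φ : ℝ → ℝ} {h : E → ℝ}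
    {x y : E} (hh : UniformConvexOn s φ h) (hmin : IsMinOn h s x) (hx : x ∈ s) (hy : y ∈ s) :
    h x + φ ‖x - y‖ ≤ h y := by
  have hsegment : ∀ t ∈ Ioc (0 : ℝ) 1, h x + (1 - t) * φ ‖x - y‖ ≤ h y := by
    rintro t ⟨ht0, ht1⟩
    have hmin_t : h x ≤ h ((1 - t) • x + t • y) :=
      hmin (hh.1 hx hy (sub_nonneg.2 ht1) ht0.le (sub_add_cancel 1 t))
    have hconv := hh.2 hx hy (sub_nonneg.2 ht1) ht0.le (sub_add_cancel 1 t)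
    rw [smul_eq_mul, smul_eq_mul] at hconv
    nlinarith
  have hlim : Tendsto (fun t : ℝ => h x + (1 - t) * φ ‖x - y‖) (𝓝[>] 0) (𝓝 (h x + φ ‖x - y‖)) := by
    refine tendsto_nhdsWithin_of_tendsto_nhds ?_
    have : Continuous fun t : ℝ => h x + (1 - t) * φ ‖x - y‖ := by fun_prop
    simpa using this.tendsto 0
  exact le_of_tendsto hlim (eventually_of_mem (Ioc_mem_nhdsGT one_pos) hsegment)

variable [InnerProductSpace ℝ E]

theorem ConvexOn.strongConvexOn_add_norm_sub_sq_div {s : Set E} {f : E → ℝ} {ρ lam : ℝ}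
    (hf : ConvexOn ℝ s fun y => f y + ρ / 2 * ‖y‖ ^ 2) (x : E) :
    StrongConvexOn s (1 / lam - ρ) fun y => f y + ‖y - x‖ ^ 2 / (2 * lam) := by
  rw [strongConvexOn_iff_convex]
  refine ((hf.add ((innerSL ℝ (-(1 / lam) • x)).toLinearMap.convexOn hf.1)).add_const
    (‖x‖ ^ 2 / (2 * lam))).congr fun y _ => ?_
  simp only [Pi.add_apply, ContinuousLinearMap.coe_coe, innerSL_apply_apply,
    real_inner_smul_left, norm_sub_sq_real, real_inner_comm x y]
  ring

theorem mul_norm_sub_sq_le_inner_of_isMinOn {f : E → ℝ} {ρ lam : ℝ} {x q g : E}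
    (hf : ConvexOn ℝ univ fun y => f y + ρ / 2 * ‖y‖ ^ 2)
    (hq : IsMinOn (fun y => f y + ‖y - x‖ ^ 2 / (2 * lam)) univ q)
    (hg : ∀ y, f x + ⟪g, y - x⟫_ℝ - ρ / 2 * ‖x - y‖ ^ 2 ≤ f y) :
    (1 / lam - ρ) * ‖x - q‖ ^ 2 ≤ ⟪g, x - q⟫_ℝ := by
  have hq_strong := (hf.strongConvexOn_add_norm_sub_sq_div x).add_le_of_isMinOn hq
    (mem_univ q) (mem_univ x)
  have hgq := hg q
  simp only [sub_self, norm_zero, norm_sub_rev q x, ne_eq, OfNat.ofNat_ne_zero,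
    not_false_eq_true, zero_pow, zero_div, add_zero] at hq_strong
  rw [← neg_sub x q, inner_neg_right] at hgq
  have hdiv : ‖x - q‖ ^ 2 / (2 * lam) = 1 / lam / 2 * ‖x - q‖ ^ 2 := by ring
  linarith

end

theorem moreau_one_step_descent_general
    (d : ℕ) (f : EuclideanSpace ℝ (Fin d) → ℝ) (ρ lam : ℝ)
    (hlam : 0 < lam)
    (hwc : ConvexOn ℝ Set.univ (fun x => f x + (ρ / 2) * ‖x‖ ^ 2))
    (flam : EuclideanSpace ℝ (Fin d) → ℝ)
    (p : EuclideanSpace ℝ (Fin d) → EuclideanSpace ℝ (Fin d))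
    (hprox : ∀ x y, f (p x) + ‖p x - x‖ ^ 2 / (2 * lam) ≤ f y + ‖y - x‖ ^ 2 / (2 * lam))
    (hflam : ∀ x, flam x = f (p x) + ‖p x - x‖ ^ 2 / (2 * lam))
    (xk xk1 g : EuclideanSpace ℝ (Fin d)) (β : ℝ)
    (hβ : 0 < β) (hg : g ≠ 0)
    (hsub : ∀ y, f xk + ⟪g, y - xk⟫_ℝ - (ρ / 2) * ‖xk - y‖ ^ 2 ≤ f y)
    (hupd : xk1 = xk - (β / ‖g‖) • g) :
    flam xk1 ≤ flam xk - ((1 / lam - ρ) * β / (lam * ‖g‖)) * ‖xk - p xk‖ ^ 2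
      + β ^ 2 / (2 * lam) := by
  set q := p xk
  set s := β / ‖g‖ with hs_def
  have hs : 0 ≤ s := by positivity
  have hsg : s * ‖g‖ = β := div_mul_cancel₀ β (norm_ne_zero_iff.2 hg)
  have hdescent : (1 / lam - ρ) * ‖xk - q‖ ^ 2 ≤ ⟪g, xk - q⟫_ℝ :=
    mul_norm_sub_sq_le_inner_of_isMinOn hwc (isMinOn_univ_iff.2 (hprox xk)) hsub
  have hstep : ‖q - xk1‖ ^ 2 = ‖xk - q‖ ^ 2 - 2 * s * ⟪g, xk - q⟫_ℝ + β ^ 2 := by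
    rw [hupd, ← hsg, show q - (xk - s • g) = s • g - (xk - q) by abel, norm_sub_sq_real,
      norm_smul, real_inner_smul_left, Real.norm_of_nonneg hs]
    ring
  have hflam_q : flam xk1 ≤ f q + ‖q - xk1‖ ^ 2 / (2 * lam) := hflam xk1 ▸ hprox xk1 q
  rw [hflam xk, norm_sub_rev q xk]
  calc flam xk1 ≤ f q + ‖q - xk1‖ ^ 2 / (2 * lam) := hflam_q
    _ = f q + ‖xk - q‖ ^ 2 / (2 * lam) - s * ⟪g, xk - q⟫_ℝ / lam + β ^ 2 / (2 * lam) := by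
      rw [hstep]; ring
    _ ≤ f q + ‖xk - q‖ ^ 2 / (2 * lam) - s * ((1 / lam - ρ) * ‖xk - q‖ ^ 2) / lam
        + β ^ 2 / (2 * lam) := by gcongr
    _ = _ := by rw [hs_def]; ring

/-- One-step descent of the Moreau envelope along the subgradient method (weakly convex case). -/
theorem moreau_one_step_descent
    (d : ℕ) (f : EuclideanSpace ℝ (Fin d) → ℝ) (ρ lam : ℝ)
    (hρ : 0 < ρ) (hlam : 0 < lam) (hlamρ : lam < 1 / ρ)
    (hwc : ConvexOn ℝ Set.univ (fun x => f x + (ρ / 2) * ‖x‖ ^ 2))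
    (hlsc : LowerSemicontinuous f)
    (hbdd : BddBelow (Set.range f))
    (flam : EuclideanSpace ℝ (Fin d) → ℝ)
    (p : EuclideanSpace ℝ (Fin d) → EuclideanSpace ℝ (Fin d))
    (hprox : ∀ x y, f (p x) + ‖p x - x‖ ^ 2 / (2 * lam) ≤ f y + ‖y - x‖ ^ 2 / (2 * lam))
    (hflam : ∀ x, flam x = f (p x) + ‖p x - x‖ ^ 2 / (2 * lam))
    (xk xk1 g : EuclideanSpace ℝ (Fin d)) (β : ℝ)
    (hβ : 0 < β) (hg : g ≠ 0)
    (hsub : ∀ y, f xk + ⟪g, y - xk⟫_ℝ - (ρ / 2) * ‖xk - y‖ ^ 2 ≤ f y)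
    (hupd : xk1 = xk - (β / ‖g‖) • g) :
    flam xk1 ≤ flam xk - ((1 / lam - ρ) * β / (lam * ‖g‖)) * ‖xk - p xk‖ ^ 2
      + β ^ 2 / (2 * lam) :=
  moreau_one_step_descent_general d f ρ lam hlam hwc flam p hprox hflam xk xk1 g β hβ hg hsub hupd
end

section
/- Let f : ℝ^d → ℝ be nonnegative and ρ-weakly convex, and let x^{k+1} = argmin_x max{ f(x^k) + ⟨g(x^k), x - x^k⟩, 0 } + (1/(2α_k))‖x - x^k‖² with g(x^k) ∈ ∂f(x^k) nonzero and α_k = β_k/‖g(x^k)‖. Then for any x ∈ ℝ^d, ‖x^{k+1} - x‖² ≤ ‖x^k - x‖² - 2(β_k/‖g(x^k)‖)( f(x^k) - f(x) - (ρ/2)‖x^k - x‖² ) + β_k². -/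
open scoped InnerProductSpace BigOperators

private lemma aux_lower (m fx i n G a : ℝ) (ha : 0 < a)
    (h1 : fx + i ≤ m) (h2 : -(G * n) ≤ i) :
    -(2 * a * m) - n ^ 2 ≤ a ^ 2 * G ^ 2 - 2 * a * fx := by
  nlinarith [sq_nonneg (a * G - n), mul_le_mul_of_nonneg_left h1 (by linarith : (0:ℝ) ≤ 2 * a),
    mul_le_mul_of_nonneg_left h2 (by linarith : (0:ℝ) ≤ 2 * a)]

private lemma aux_final (L R mB mA nf fx fxv q a b2 : ℝ) (ha : 0 < a)
    (hmain : L ≤ 2 * a * mB + R - 2 * a * mA - nf)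
    (hlow : -(2 * a * mA) - nf ≤ a ^ 2 * b2 ^ 2 - 2 * a * fx)
    (hup : mB ≤ fxv + q) :
    L ≤ R - 2 * a * (fx - fxv - q) + a ^ 2 * b2 ^ 2 := by
  nlinarith [mul_le_mul_of_nonneg_left hup (by linarith : (0:ℝ) ≤ 2 * a)]

set_option maxHeartbeats 1000000 in
/-- Basic recursion of the truncated subgradient method for nonnegative weakly convex `f`. -/
theorem truncated_subgrad_recursion
    (d : ℕ) (f : EuclideanSpace ℝ (Fin d) → ℝ) (ρ : ℝ)
    (hρ : 0 ≤ ρ)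
    (hnonneg : ∀ x, 0 ≤ f x)
    (hwc : ConvexOn ℝ Set.univ (fun x => f x + (ρ / 2) * ‖x‖ ^ 2))
    (xk xk1 g : EuclideanSpace ℝ (Fin d)) (β α : ℝ)
    (hβ : 0 < β) (hg : g ≠ 0) (hα : α = β / ‖g‖)
    (hsub : ∀ y, f xk + ⟪g, y - xk⟫_ℝ - (ρ / 2) * ‖xk - y‖ ^ 2 ≤ f y)
    (hmin : ∀ y : EuclideanSpace ℝ (Fin d),
      max (f xk + ⟪g, xk1 - xk⟫_ℝ) 0 + ‖xk1 - xk‖ ^ 2 / (2 * α) ≤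
        max (f xk + ⟪g, y - xk⟫_ℝ) 0 + ‖y - xk‖ ^ 2 / (2 * α)) :
    ∀ x : EuclideanSpace ℝ (Fin d),
      ‖xk1 - x‖ ^ 2 ≤ ‖xk - x‖ ^ 2
        - 2 * (β / ‖g‖) * (f xk - f x - (ρ / 2) * ‖xk - x‖ ^ 2) + β ^ 2 := by
  intro x
  have hgn : 0 < ‖g‖ := norm_pos_iff.mpr hg
  have hαpos : 0 < α := by rw [hα]; positivity
  have hαg : α * ‖g‖ = β := by rw [hα]; field_simp
  set A : ℝ := f xk + ⟪g, xk1 - xk⟫_ℝ with hA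
  -- Strong convexity of the subproblem at the minimizer:
  have key : ∀ y : EuclideanSpace ℝ (Fin d),
      ‖y - xk1‖ ^ 2 / (2 * α) ≤
        (max (f xk + ⟪g, y - xk⟫_ℝ) 0 + ‖y - xk‖ ^ 2 / (2 * α))
          - (max A 0 + ‖xk1 - xk‖ ^ 2 / (2 * α)) := by
    intro y
    set B : ℝ := f xk + ⟪g, y - xk⟫_ℝ with hB
    set D : ℝ := (max B 0 + ‖y - xk‖ ^ 2 / (2 * α))
      - (max A 0 + ‖xk1 - xk‖ ^ 2 / (2 * α)) with hD
    have hstep : ∀ t : ℝ, 0 < t → t ≤ 1 →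
        (1 - t) * (‖y - xk1‖ ^ 2 / (2 * α)) ≤ D := by
      intro t ht0 ht1
      have hz := hmin (xk1 + t • (y - xk1))
      have hin : f xk + ⟪g, (xk1 + t • (y - xk1)) - xk⟫_ℝ = (1 - t) * A + t * B := by
        have h1 : (xk1 + t • (y - xk1)) - xk = (1 - t) • (xk1 - xk) + t • (y - xk) := by
          module
        rw [h1, inner_add_right, real_inner_smul_right, real_inner_smul_right, hA, hB]
        ring
      have hnorm : ‖(xk1 + t • (y - xk1)) - xk‖ ^ 2
          = (1 - t) * ‖xk1 - xk‖ ^ 2 + t * ‖y - xk‖ ^ 2 - t * (1 - t) * ‖y - xk1‖ ^ 2 := by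
        have h1 : (xk1 + t • (y - xk1)) - xk = (xk1 - xk) + t • (y - xk1) := by module
        have h2 : (y - xk) = (xk1 - xk) + (y - xk1) := by module
        rw [h1, norm_add_sq_real, real_inner_smul_right, norm_smul]
        rw [h2, norm_add_sq_real]
        simp only [Real.norm_eq_abs, mul_pow, sq_abs]
        ring
      have hmax : max ((1 - t) * A + t * B) 0 ≤ (1 - t) * max A 0 + t * max B 0 := by
        apply max_le
        · have h1 : (1 - t) * A ≤ (1 - t) * max A 0 :=
            mul_le_mul_of_nonneg_left (le_max_left _ _) (by linarith)
          have h2 : t * B ≤ t * max B 0 :=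
            mul_le_mul_of_nonneg_left (le_max_left _ _) ht0.le
          linarith
        · have h1 : (0:ℝ) ≤ (1 - t) * max A 0 :=
            mul_nonneg (by linarith) (le_max_right _ _)
          have h2 : (0:ℝ) ≤ t * max B 0 := mul_nonneg ht0.le (le_max_right _ _)
          linarith
      rw [hin, hnorm] at hz
      have hz' : max A 0 + ‖xk1 - xk‖ ^ 2 / (2 * α) ≤
          (1 - t) * max A 0 + t * max B 0
            + ((1 - t) * ‖xk1 - xk‖ ^ 2 + t * ‖y - xk‖ ^ 2
                - t * (1 - t) * ‖y - xk1‖ ^ 2) / (2 * α) := by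
        linarith
      have hmul : t * ((1 - t) * (‖y - xk1‖ ^ 2 / (2 * α))) ≤ t * D := by
        rw [hD]
        have expand : ((1 - t) * ‖xk1 - xk‖ ^ 2 + t * ‖y - xk‖ ^ 2
              - t * (1 - t) * ‖y - xk1‖ ^ 2) / (2 * α)
            = (1 - t) * (‖xk1 - xk‖ ^ 2 / (2 * α)) + t * (‖y - xk‖ ^ 2 / (2 * α))
              - t * ((1 - t) * (‖y - xk1‖ ^ 2 / (2 * α))) := by
          field_simp
        rw [expand] at hz'
        nlinarith [hz']
      exact le_of_mul_le_mul_left hmul ht0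
    -- take t → 0
    have hc0 : 0 ≤ ‖y - xk1‖ ^ 2 / (2 * α) := by positivity
    refine le_of_forall_pos_le_add ?_
    intro ε hε
    set c : ℝ := ‖y - xk1‖ ^ 2 / (2 * α) with hc
    set t : ℝ := min (1/2) (ε / (c + 1)) with ht
    have ht0 : 0 < t := by
      apply lt_min (by norm_num)
      positivity
    have ht1 : t ≤ 1 := le_trans (min_le_left _ _) (by norm_num)
    have h1 := hstep t ht0 ht1
    have htc : t * c ≤ ε := by
      have h2 : t ≤ ε / (c + 1) := min_le_right _ _
      have h3 : t * c ≤ (ε / (c + 1)) * c := mul_le_mul_of_nonneg_right h2 hc0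
      have h4 : (ε / (c + 1)) * c ≤ ε := by
        rw [div_mul_eq_mul_div, div_le_iff₀ (by linarith)]
        nlinarith
      linarith
    nlinarith [h1]
  -- Now apply at x and combine.
  have hkx := key x
  -- clear denominators
  have h2α : (0:ℝ) < 2 * α := by linarith
  have hmain : ‖x - xk1‖ ^ 2 ≤ 2 * α * max (f xk + ⟪g, x - xk⟫_ℝ) 0 + ‖x - xk‖ ^ 2
      - 2 * α * max A 0 - ‖xk1 - xk‖ ^ 2 := by
    have hne : (2 * α) ≠ 0 := ne_of_gt h2α
    have cancel : ∀ u : ℝ, 2 * α * (u / (2 * α)) = u := fun u => by field_simp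
    have h := mul_le_mul_of_nonneg_left hkx h2α.le
    rw [mul_sub, mul_add, mul_add, cancel, cancel, cancel] at h
    linarith
  -- upper bound on max at x
  have hupper : max (f xk + ⟪g, x - xk⟫_ℝ) 0 ≤ f x + ρ / 2 * ‖xk - x‖ ^ 2 := by
    apply max_le
    · have := hsub x
      linarith
    · have h1 := hnonneg x
      have h2 : 0 ≤ ρ / 2 * ‖xk - x‖ ^ 2 := mul_nonneg (by linarith) (sq_nonneg _)
      linarith
  -- lower bound on max at xk1
  have hinner : -(‖g‖ * ‖xk1 - xk‖) ≤ ⟪g, xk1 - xk⟫_ℝ :=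
    neg_le_of_abs_le (abs_real_inner_le_norm g (xk1 - xk))
  have hlower : -(2 * α * max A 0) - ‖xk1 - xk‖ ^ 2 ≤ α ^ 2 * ‖g‖ ^ 2 - 2 * α * f xk := by
    exact aux_lower _ _ _ _ _ _ hαpos (le_max_left _ _) hinner
  have hn1 : ‖x - xk1‖ = ‖xk1 - x‖ := norm_sub_rev _ _
  have hn2 : ‖x - xk‖ = ‖xk - x‖ := norm_sub_rev _ _
  have hβα : β / ‖g‖ = α := hα.symm
  rw [hβα]
  have hβ2 : α ^ 2 * ‖g‖ ^ 2 = β ^ 2 := by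
    have : (α * ‖g‖) ^ 2 = β ^ 2 := by rw [hαg]
    nlinarith [this]
  rw [hn1, hn2] at hmain
  calc ‖xk1 - x‖ ^ 2 ≤ ‖xk - x‖ ^ 2 - 2 * α * (f xk - f x - ρ / 2 * ‖xk - x‖ ^ 2)
        + α ^ 2 * ‖g‖ ^ 2 :=
      aux_final (‖xk1 - x‖ ^ 2) (‖xk - x‖ ^ 2) (max (f xk + ⟪g, x - xk⟫_ℝ) 0)
        (max A 0) (‖xk1 - xk‖ ^ 2) (f xk) (f x) (ρ / 2 * ‖xk - x‖ ^ 2) α ‖g‖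
        hαpos hmain hlower hupper
    _ = ‖xk - x‖ ^ 2 - 2 * α * (f xk - f x - ρ / 2 * ‖xk - x‖ ^ 2) + β ^ 2 := by
      rw [hβ2]
end

section
/- Let f : ℝ^d → ℝ be convex and r : ℝ^d → (-∞,∞] be proper, convex, and L_r-Lipschitz on its effective domain. Consider the proximal subgradient step x^{k+1} = prox_{α_k r}(x^k - α_k g(x^k)) with g(x^k) ∈ ∂f(x^k), α_k = β_k/(‖g(x^k)‖ + L_r), and β_k > 0. Then for any x ∈ dom r, ‖x^{k+1} - x‖² ≤ ‖x^k - x‖² - 2α_k(φ(x^k) - φ(x)) + β_k², where φ = f + r. -/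
set_option maxHeartbeats 1000000

open scoped InnerProductSpace BigOperators

/-- Basic recursion of the proximal subgradient method, convex case (Lemma 4.2(a)). -/
theorem prox_subgrad_recursion_convex
    (d : ℕ) (f r : EuclideanSpace ℝ (Fin d) → ℝ)
    (S : Set (EuclideanSpace ℝ (Fin d))) (hSne : S.Nonempty)
    (hconvf : ConvexOn ℝ Set.univ f)
    (hconvr : ConvexOn ℝ S r)
    (Lr : ℝ) (hLr : 0 < Lr)
    (hrLip : ∀ x ∈ S, ∀ y ∈ S, r x - r y ≤ Lr * ‖x - y‖)
    (xk xk1 g : EuclideanSpace ℝ (Fin d)) (β α : ℝ)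
    (hβ : 0 < β) (hα : α = β / (‖g‖ + Lr))
    (hxkS : xk ∈ S) (hxk1S : xk1 ∈ S)
    (hsub : ∀ y, f xk + ⟪g, y - xk⟫_ℝ ≤ f y)
    (hmin : ∀ y ∈ S,
      r xk1 + ‖xk1 - (xk - α • g)‖ ^ 2 / (2 * α) ≤
        r y + ‖y - (xk - α • g)‖ ^ 2 / (2 * α)) :
    ∀ x ∈ S, ‖xk1 - x‖ ^ 2 ≤ ‖xk - x‖ ^ 2
      - 2 * α * ((f xk + r xk) - (f x + r x)) + β ^ 2 := by
  intro x hxS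
  have hgnn : (0:ℝ) ≤ ‖g‖ := norm_nonneg g
  have hden : (0:ℝ) < ‖g‖ + Lr := by linarith
  have hαpos : 0 < α := by rw [hα]; positivity
  set z : EuclideanSpace ℝ (Fin d) := xk - α • g with hz
  set c2 : ℝ := ‖x - xk1‖ ^ 2 with hc2
  have hc2nn : (0:ℝ) ≤ c2 := by positivity
  -- Step 1: for all small positive t
  have step1 : ∀ t : ℝ, 0 < t → t ≤ 1 →
      α * (r xk1 - r x) ≤ ⟪xk1 - z, x - xk1⟫_ℝ + t * (c2 / 2) := by
    intro t ht ht1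
    set y : EuclideanSpace ℝ (Fin d) := xk1 + t • (x - xk1) with hy
    have hycomb : y = (1 - t) • xk1 + t • x := by
      rw [hy]; rw [smul_sub, sub_smul, one_smul]; abel
    have hyS : y ∈ S := by
      rw [hycomb]
      exact hconvr.1 hxk1S hxS (by linarith) ht.le (by ring)
    have hry : r y ≤ (1 - t) * r xk1 + t * r x := by
      rw [hycomb]
      exact hconvr.2 hxk1S hxS (by linarith) ht.le (by ring)
    have hmy := hmin y hyS
    have hnorm : ‖y - z‖ ^ 2 =
        ‖xk1 - z‖ ^ 2 + 2 * (t * ⟪xk1 - z, x - xk1⟫_ℝ) + t ^ 2 * c2 := by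
      have hyz : y - z = (xk1 - z) + t • (x - xk1) := by rw [hy]; abel
      rw [hyz, norm_add_sq_real, real_inner_smul_right, norm_smul,
        Real.norm_eq_abs, abs_of_pos ht, hc2]
      ring
    rw [hnorm] at hmy
    have h2α : (0:ℝ) < 2 * α := by linarith
    have h6 : t * (r xk1 - r x) ≤
        (2 * (t * ⟪xk1 - z, x - xk1⟫_ℝ) + t ^ 2 * c2) / (2 * α) := by
      have hsplit : (‖xk1 - z‖ ^ 2 + 2 * (t * ⟪xk1 - z, x - xk1⟫_ℝ) + t ^ 2 * c2) / (2 * α)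
          = ‖xk1 - z‖ ^ 2 / (2 * α)
            + (2 * (t * ⟪xk1 - z, x - xk1⟫_ℝ) + t ^ 2 * c2) / (2 * α) := by
        ring
      rw [hsplit] at hmy
      nlinarith [hmy, hry]
    have h6' : t * (r xk1 - r x) * (2 * α) ≤
        2 * (t * ⟪xk1 - z, x - xk1⟫_ℝ) + t ^ 2 * c2 :=
      (le_div_iff₀ h2α).mp h6
    have h2t : (0:ℝ) < 2 * t := by linarith
    nlinarith [h6', ht, mul_pos ht hαpos]
  -- Step 2: limit as t → 0+
  have key : α * (r xk1 - r x) ≤ ⟪xk1 - z, x - xk1⟫_ℝ := by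
    apply le_of_forall_pos_le_add
    intro ε hε
    set t : ℝ := min 1 (ε / (c2 / 2 + 1)) with htdef
    have htpos : 0 < t := lt_min one_pos (by positivity)
    have ht1 : t ≤ 1 := min_le_left _ _
    have h := step1 t htpos ht1
    have htc : t * (c2 / 2) ≤ ε := by
      have h1 : t ≤ ε / (c2 / 2 + 1) := min_le_right _ _
      have h2 : t * (c2 / 2) ≤ (ε / (c2 / 2 + 1)) * (c2 / 2) :=
        mul_le_mul_of_nonneg_right h1 (by positivity)
      have h3 : (ε / (c2 / 2 + 1)) * (c2 / 2) ≤ ε := by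
        rw [div_mul_eq_mul_div, div_le_iff₀ (by positivity : (0:ℝ) < c2 / 2 + 1)]
        nlinarith
      linarith
    linarith
  -- Step 3: assemble
  have hzsplit : xk1 - z = (xk1 - xk) + α • g := by rw [hz]; abel
  have keyexp : α * (r xk1 - r x) ≤
      ⟪xk1 - xk, x - xk1⟫_ℝ + α * ⟪g, x - xk1⟫_ℝ := by
    rw [hzsplit, inner_add_left, real_inner_smul_left] at key
    exact key
  have hid1 : ‖xk - x‖ ^ 2 =
      ‖xk1 - xk‖ ^ 2 + 2 * ⟪xk1 - xk, x - xk1⟫_ℝ + ‖xk1 - x‖ ^ 2 := by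
    have h : xk - x = -(xk1 - xk) + -(x - xk1) := by abel
    rw [h, norm_add_sq_real, norm_neg, norm_neg, inner_neg_neg, norm_sub_rev x xk1]
  have hinsplit : ⟪g, x - xk1⟫_ℝ = ⟪g, x - xk⟫_ℝ + ⟪g, xk - xk1⟫_ℝ := by
    have h : x - xk1 = (x - xk) + (xk - xk1) := by abel
    rw [h, inner_add_right]
  set tt : ℝ := ‖xk - xk1‖ with htt
  have hnsr : ‖xk1 - xk‖ = tt := by rw [htt, norm_sub_rev]
  have hsubx : ⟪g, x - xk⟫_ℝ ≤ f x - f xk := by linarith [hsub x]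
  have hB : ⟪g, xk - xk1⟫_ℝ ≤ ‖g‖ * tt := by
    calc ⟪g, xk - xk1⟫_ℝ ≤ ‖g‖ * ‖xk - xk1‖ := real_inner_le_norm g _
    _ = ‖g‖ * tt := rfl
  have hLip : r xk - r xk1 ≤ Lr * tt := hrLip xk hxkS xk1 hxk1S
  have hβα : α * (‖g‖ + Lr) = β := by
    rw [hα, div_mul_cancel₀]; exact ne_of_gt hden
  have k3 : α * ⟪g, x - xk⟫_ℝ ≤ α * (f x - f xk) :=
    mul_le_mul_of_nonneg_left hsubx hαpos.le
  have k4 : α * ⟪g, xk - xk1⟫_ℝ ≤ α * (‖g‖ * tt) :=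
    mul_le_mul_of_nonneg_left hB hαpos.le
  have k5 : α * (r xk - r xk1) ≤ α * (Lr * tt) :=
    mul_le_mul_of_nonneg_left hLip hαpos.le
  have st : -(tt ^ 2) + 2 * (β * tt) ≤ β ^ 2 := by nlinarith [sq_nonneg (tt - β)]
  have k6 : α * (‖g‖ * tt) + α * (Lr * tt) = β * tt := by rw [← hβα]; ring
  rw [hinsplit, mul_add] at keyexp
  rw [hnsr] at hid1
  linarith [keyexp, hid1, k3, k4, k5, k6, st]
end

section
/- Let f : ℝ^d → ℝ be ρ-weakly convex and r : ℝ^d → (-∞,∞] be proper, lsc, η-weakly convex, and L_r-Lipschitz on dom r. For the proximal subgradient step x^{k+1} = prox_{α_k r}(x^k - α_k g(x^k)) with g(x^k) ∈ ∂f(x^k), α_k = β_k/(‖g(x^k)‖ + L_r) < 1/η, and any x ∈ dom r: (1 - α_k η)‖x^{k+1} - x‖² ≤ ‖x^k - x‖² - 2α_k( φ(x^k) - φ(x) - (ρ/2)‖x^k - x‖² ) + β_k², where φ = f + r. -/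
open scoped InnerProductSpace BigOperators

/-- Basic recursion of the proximal subgradient method, weakly convex case (Lemma 4.2(b)). -/
theorem prox_subgrad_recursion_weakly_convex
    (d : ℕ) (f r : EuclideanSpace ℝ (Fin d) → ℝ)
    (S : Set (EuclideanSpace ℝ (Fin d))) (hSne : S.Nonempty)
    (ρ η : ℝ) (hρ : 0 ≤ ρ) (hη : 0 ≤ η)
    (hwcf : ConvexOn ℝ Set.univ (fun x => f x + (ρ / 2) * ‖x‖ ^ 2))
    (hwcr : ConvexOn ℝ S (fun x => r x + (η / 2) * ‖x‖ ^ 2))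
    (Lr : ℝ) (hLr : 0 < Lr)
    (hrLip : ∀ x ∈ S, ∀ y ∈ S, r x - r y ≤ Lr * ‖x - y‖)
    (xk xk1 g : EuclideanSpace ℝ (Fin d)) (β α : ℝ)
    (hβ : 0 < β) (hα : α = β / (‖g‖ + Lr)) (hαη : α * η < 1)
    (hxkS : xk ∈ S) (hxk1S : xk1 ∈ S)
    (hsub : ∀ y, f xk + ⟪g, y - xk⟫_ℝ - (ρ / 2) * ‖xk - y‖ ^ 2 ≤ f y)
    (hmin : ∀ y ∈ S,
      r xk1 + ‖xk1 - (xk - α • g)‖ ^ 2 / (2 * α)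
        + ((1 / α - η) / 2) * ‖xk1 - y‖ ^ 2 ≤
        r y + ‖y - (xk - α • g)‖ ^ 2 / (2 * α)) :
    ∀ x ∈ S, (1 - α * η) * ‖xk1 - x‖ ^ 2 ≤ ‖xk - x‖ ^ 2
      - 2 * α * ((f xk + r xk) - (f x + r x) - (ρ / 2) * ‖xk - x‖ ^ 2) + β ^ 2 := by
  intro x hx
  have hden : (0:ℝ) < ‖g‖ + Lr := add_pos_of_nonneg_of_pos (norm_nonneg g) hLr
  have hαpos : 0 < α := by rw [hα]; positivity
  have hβeq : α * (‖g‖ + Lr) = β := by rw [hα]; field_simp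
  have hsplit : ∀ y : EuclideanSpace ℝ (Fin d), y - (xk - α • g) = (y - xk) + α • g := by
    intro y; module
  have expand : ∀ y : EuclideanSpace ℝ (Fin d),
      ‖y - (xk - α • g)‖ ^ 2 = ‖y - xk‖ ^ 2 + 2 * (α * ⟪g, y - xk⟫_ℝ) + α ^ 2 * ‖g‖ ^ 2 := by
    intro y
    rw [hsplit y, norm_add_sq_real, real_inner_smul_right, real_inner_comm, norm_smul,
      Real.norm_eq_abs, mul_pow, sq_abs]
  have h1 := hmin x hx
  rw [expand x, expand xk1] at h1
  have key : 2 * α * r xk1 + ‖xk1 - xk‖ ^ 2 + 2 * α * ⟪g, xk1 - xk⟫_ℝ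
      + (1 - α * η) * ‖xk1 - x‖ ^ 2
      ≤ 2 * α * r x + ‖x - xk‖ ^ 2 + 2 * α * ⟪g, x - xk⟫_ℝ := by
    have h2α : (0:ℝ) < 2 * α := by linarith
    have h1' := mul_le_mul_of_nonneg_left h1 (le_of_lt h2α)
    simp only [mul_add] at h1'
    have c1 : 2 * α * ((‖xk1 - xk‖ ^ 2 + 2 * (α * ⟪g, xk1 - xk⟫_ℝ) + α ^ 2 * ‖g‖ ^ 2) / (2 * α))
        = ‖xk1 - xk‖ ^ 2 + 2 * (α * ⟪g, xk1 - xk⟫_ℝ) + α ^ 2 * ‖g‖ ^ 2 :=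
      mul_div_cancel₀ _ (ne_of_gt h2α)
    have c2 : 2 * α * ((‖x - xk‖ ^ 2 + 2 * (α * ⟪g, x - xk⟫_ℝ) + α ^ 2 * ‖g‖ ^ 2) / (2 * α))
        = ‖x - xk‖ ^ 2 + 2 * (α * ⟪g, x - xk⟫_ℝ) + α ^ 2 * ‖g‖ ^ 2 :=
      mul_div_cancel₀ _ (ne_of_gt h2α)
    have c3 : 2 * α * ((1 / α - η) / 2 * ‖xk1 - x‖ ^ 2) = (1 - α * η) * ‖xk1 - x‖ ^ 2 := by
      field_simp
    rw [c1, c2, c3] at h1'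
    linarith
  have hsubx := hsub x
  have hlip := hrLip xk hxkS xk1 hxk1S
  have hcs : -(‖g‖ * ‖xk1 - xk‖) ≤ ⟪g, xk1 - xk⟫_ℝ := by
    have := abs_real_inner_le_norm g (xk1 - xk)
    cases abs_le.mp this with
    | intro l r => linarith
  have hnrev : ‖xk - xk1‖ = ‖xk1 - xk‖ := norm_sub_rev _ _
  have hnrev2 : ‖x - xk‖ = ‖xk - x‖ := norm_sub_rev _ _
  rw [hnrev] at hlip
  rw [hnrev2] at key
  nlinarith [key, sq_nonneg (‖xk1 - xk‖ - β),
    mul_le_mul_of_nonneg_left hsubx (by linarith : (0:ℝ) ≤ 2 * α),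
    mul_le_mul_of_nonneg_left hlip (by linarith : (0:ℝ) ≤ 2 * α),
    mul_le_mul_of_nonneg_left hcs (by linarith : (0:ℝ) ≤ 2 * α),
    hβeq, norm_nonneg (xk1 - xk), hαpos]
end

section
/- Let (β_k) be positive reals with Σ β_k = ∞ and Σ β_k‖v_k‖² < ∞ for a sequence (v_k) in ℝ^d satisfying ‖v_{k+1} - v_k‖ ≤ M β_k for some M > 0 (Lipschitz-type increment bound). Then lim_{k→∞} ‖v_k‖ = 0. -/
/-!
Write `a k = ‖v k‖`. Since `∑ β_k = ∞` while `∑ β_k a_k² < ∞`, the sequence `a` dips below any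
level `δ > 0` infinitely often. Going backwards from such a dip at index `n`, each step can raise
`a` by at most `M β_i`, and only the steps where `a_i > δ` matter; those cost `β_i ≤ β_i a_i² / δ²`.
Hence `a_m ≤ δ + (M / δ²) ∑_{m ≤ i < n} β_i a_i²`, and the tail sums of the convergent series make
the second term small for large `m`.
-/

open Filter Finset

lemma Summable.eventually_forall_sum_Ico_lt {u : ℕ → ℝ} (hu : Summable u) {η : ℝ} (hη : 0 < η) :
    ∀ᶠ m in atTop, ∀ n, ∑ i ∈ Ico m n, u i < η := by
  obtain ⟨N, hN⟩ := Metric.cauchySeq_iff.1 hu.hasSum.tendsto_sum_nat.cauchySeq η hη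
  filter_upwards [eventually_ge_atTop N] with m hm n
  rcases le_or_gt m n with hmn | hnm
  · rw [sum_Ico_eq_sub _ hmn]
    exact (le_abs_self _).trans_lt (hN n (hm.trans hmn) m hm)
  · simpa [Ico_eq_empty_of_le hnm.le] using hη

lemma frequently_lt_of_summable_mul {β w : ℕ → ℝ} {ε : ℝ} (hβ : ∀ k, 0 ≤ β k)
    (hdiv : Tendsto (fun n => ∑ k ∈ range n, β k) atTop atTop)
    (hsum : Summable fun k => β k * w k) (hε : 0 < ε) : ∃ᶠ k in atTop, w k < ε := by
  by_contra h
  simp only [not_frequently, not_lt] at h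
  have hβsum : Summable β := (hsum.div_const ε).of_norm_bounded_eventually_nat <|
    h.mono fun k hk => by
      rw [Real.norm_of_nonneg (hβ k), le_div_iff₀ hε]
      exact mul_le_mul_of_nonneg_left hk (hβ k)
  exact not_tendsto_atTop_of_tendsto_nhds hβsum.hasSum.tendsto_sum_nat hdiv

lemma le_add_div_sq_mul_sum_Ico {a β : ℕ → ℝ} {M δ : ℝ} (hβ : ∀ i, 0 ≤ β i) (hM : 0 ≤ M)
    (hδ : 0 < δ) (hstep : ∀ i, a i ≤ a (i + 1) + M * β i) {m n : ℕ} (hmn : m ≤ n)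
    (han : a n ≤ δ) : a m ≤ δ + M / δ ^ 2 * ∑ i ∈ Ico m n, β i * a i ^ 2 := by
  induction hmn using Nat.decreasingInduction with
  | self => simpa using han
  | of_succ k hkn ih =>
    have htail : 0 ≤ M / δ ^ 2 * ∑ i ∈ Ico (k + 1) n, β i * a i ^ 2 :=
      mul_nonneg (by positivity) (sum_nonneg fun i _ => mul_nonneg (hβ i) (sq_nonneg _))
    have hhead : 0 ≤ M / δ ^ 2 * (β k * a k ^ 2) :=
      mul_nonneg (by positivity) (mul_nonneg (hβ k) (sq_nonneg _))
    rw [sum_eq_sum_Ico_succ_bot hkn, mul_add]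
    rcases le_or_gt (a k) δ with hak | hak
    · linarith
    · have hsq : δ ^ 2 ≤ a k ^ 2 := pow_le_pow_left₀ hδ.le hak.le 2
      have hcost : M * β k ≤ M / δ ^ 2 * (β k * a k ^ 2) := calc
        M * β k = M / δ ^ 2 * (β k * δ ^ 2) := by field_simp
        _ ≤ M / δ ^ 2 * (β k * a k ^ 2) := by gcongr; exact hβ k
      linarith [hstep k]

/-- Abstract sequence lemma: if `Σβ_k = ∞`, `Σβ_k‖v_k‖² < ∞`, and `‖v_{k+1}-v_k‖ ≤ Mβ_k`,
then `‖v_k‖ → 0`. -/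
theorem abstract_sequence_lemma
    (d : ℕ) (v : ℕ → EuclideanSpace ℝ (Fin d)) (β : ℕ → ℝ) (M : ℝ)
    (hβ : ∀ k, 0 < β k) (hM : 0 < M)
    (hdiv : Filter.Tendsto (fun n => ∑ j ∈ Finset.range n, β j) Filter.atTop Filter.atTop)
    (hsum : Summable (fun k => β k * ‖v k‖ ^ 2))
    (hinc : ∀ k, ‖v (k + 1) - v k‖ ≤ M * β k) :
    Filter.Tendsto (fun k => ‖v k‖) Filter.atTop (nhds 0) := by
  have hβ0 : ∀ k, 0 ≤ β k := fun k => (hβ k).le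
  have hstep : ∀ i, ‖v i‖ ≤ ‖v (i + 1)‖ + M * β i := fun i => by
    linarith [norm_le_insert (v (i + 1)) (v i), hinc i]
  refine tendsto_order.2 ⟨fun c hc => Eventually.of_forall fun k => hc.trans_le (norm_nonneg _),
    fun ε hε => ?_⟩
  have hδ : 0 < ε / 2 := half_pos hε
  have hdips := frequently_lt_of_summable_mul hβ0 hdiv hsum (pow_pos hδ 2)
  filter_upwards [hsum.eventually_forall_sum_Ico_lt (η := (ε / 2) ^ 3 / M) (by positivity)]
    with m hm
  obtain ⟨n, hmn, hn⟩ := hdips.forall_exists_of_atTop m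
  calc ‖v m‖ ≤ ε / 2 + M / (ε / 2) ^ 2 * ∑ i ∈ Ico m n, β i * ‖v i‖ ^ 2 :=
        le_add_div_sq_mul_sum_Ico hβ0 hM.le hδ hstep hmn (lt_of_pow_lt_pow_left₀ 2 hδ.le hn).le
    _ < ε / 2 + M / (ε / 2) ^ 2 * ((ε / 2) ^ 3 / M) := by gcongr; exact hm n
    _ = ε := by field_simp; ring
end
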